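/- arXiv:1506.03192 — 3 statements merged into one kernel-verified Lean document; each statement's English description precedes it below -/
import Mathlib

section
/- For any 0 ≤ m ≤ n, the backward maximum at time n−m of the dual walk started at m satisfies L(n−m)∘ϑ^m = S(m) − min_{k∈{m,…,n}} S(k), where L(j) = max_{k=0,…,j} S(−k). -/
open scoped Classical NNReal
noncomputable section

/-- Finite point measures on `(0,∞)`, modeled as multisets of atoms in `ℝ≥0`. -/
abbrev PtM := Multiset ℝ≥0

/-- A stick: a life-length together with a finite point measure of birth times. -/
abbrev Stick := ℝ≥0 × PtM

/-- The space of doubly infinite sequences of sticks. -/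
abbrev Om := ℤ → Stick

/-- The shift operator `θ_n`. -/
def theta (n : ℤ) (ω : Om) : Om := fun k => ω (n + k)

/-- The dual (time-reversal) operator `ϑ^n`. -/
def dual (n : ℤ) (ω : Om) : Om := fun k => ω (n - k - 1)

/-- Life length of the `k`-th individual. -/
def Vc (ω : Om) (k : ℤ) : ℝ≥0 := (ω k).1

/-- Point measure (ages at childbearing) of the `k`-th individual. -/
def Pc (ω : Om) (k : ℤ) : PtM := (ω k).2

/-- The Lukasiewicz path `S`. -/
def Sw (ω : Om) (n : ℤ) : ℤ :=
  if 0 ≤ n then ∑ k ∈ Finset.range n.toNat, ((Multiset.card (Pc ω (k : ℤ)) : ℤ) - 1)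
  else - ∑ k ∈ Finset.range (-n).toNat, ((Multiset.card (Pc ω (-(k : ℤ) - 1)) : ℤ) - 1)

/-- `π(ν)`: the supremum of the support (largest atom) of a finite point measure. -/
def piM (ν : PtM) : ℝ≥0 := ν.sup

/-- `Υ_j(ν)`: removes the `j` largest atoms of `ν`. -/
def upsilon (j : ℕ) (ν : PtM) : PtM :=
  ((ν.sort (· ≤ ·)).take (Multiset.card ν - j) : List ℝ≥0)

/-- The map `Φ` driving the spine process dynamics. -/
def phiSp (Y : List PtM) (ν : PtM) : List PtM :=
  if ν = 0 then
    match Y.reverse.dropWhile (fun m => decide (Multiset.card m < 2)) with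
    | [] => []
    | h :: t => (upsilon 1 h :: t).reverse
  else Y ++ [ν]

/-- The spine process `𝕊₀ⁿ`. -/
def spine (ω : Om) : ℕ → List PtM
  | 0 => []
  | n + 1 => phiSp (spine ω n) (Pc ω (n : ℤ))

/-- `π` extended to finite sequences of point measures. -/
def piL (Y : List PtM) : ℝ≥0 := (Y.map piM).sum

/-- The chronological height process `ℍ(n) = π(𝕊₀ⁿ)`. -/
def Hchr (ω : Om) (n : ℕ) : ℝ≥0 := piL (spine ω n)

/-- The genealogical height process
`𝓗(n) = #{k ∈ {0,…,n−1} : S(k+1) ≤ min_{k+1 ≤ j ≤ n} S(j)}`. -/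
def genH (ω : Om) (n : ℕ) : ℕ :=
  ((Finset.range n).filter
    (fun k : ℕ => ∀ j : ℕ, j ∈ Finset.Icc (k + 1) n → Sw ω ((k : ℤ) + 1) ≤ Sw ω (j : ℤ))).card

/-- Weak ascending ladder height times `T(k)` (valued `⊤` if nonexistent). -/
def ladderT (ω : Om) : ℕ → ℕ∞
  | 0 => 0
  | k + 1 => sInf {x : ℕ∞ | ∃ m j : ℕ, x = (m : ℕ∞) ∧ ladderT ω k = (j : ℕ∞) ∧
      j < m ∧ Sw ω (j : ℤ) ≤ Sw ω (m : ℤ)}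

/-- `T^{-1}(n) = min{k ≥ 0 : T(k) ≥ n}`. -/
def Tinv (ω : Om) (n : ℕ) : ℕ := sInf {k : ℕ | (n : ℕ∞) ≤ ladderT ω k}

/-- `T̃^{-1}(n) = max{k ≥ 0 : T(k) ≤ n}`. -/
def tildeTinv (ω : Om) (n : ℕ) : ℕ := sSup {k : ℕ | ladderT ω k ≤ (n : ℕ∞)}

/-- First passage time upward `τ_ℓ = inf{k > 0 : S(k) ≥ ℓ}`. -/
def tauUp (ω : Om) (ℓ : ℤ) : ℕ∞ :=
  sInf {x : ℕ∞ | ∃ k : ℕ, x = (k : ℕ∞) ∧ 0 < k ∧ ℓ ≤ Sw ω (k : ℤ)}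

/-- First hitting time downward `τ⁻_ℓ = inf{k ≥ 0 : S(k) = −ℓ}`. -/
def tauDown (ω : Om) (ℓ : ℤ) : ℕ∞ :=
  sInf {x : ℕ∞ | ∃ k : ℕ, x = (k : ℕ∞) ∧ Sw ω (k : ℤ) = -ℓ}

/-- `τ_ℓ` as a natural number (junk value `0` when infinite). -/
def tauUpN (ω : Om) (ℓ : ℤ) : ℕ := (tauUp ω ℓ).toNat

/-- The undershoot `ζ_ℓ = ℓ − S(τ_ℓ − 1)`. -/
def zetaU (ω : Om) (ℓ : ℤ) : ℤ := ℓ - Sw ω ((tauUpN ω ℓ : ℤ) - 1)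

/-- `μ_ℓ = Υ_{ζ_ℓ}(𝒫_{τ_ℓ − 1})`. -/
def muU (ω : Om) (ℓ : ℤ) : PtM := upsilon (zetaU ω ℓ).toNat (Pc ω ((tauUpN ω ℓ : ℤ) - 1))

/-- `𝒬(k) = μ₀ ∘ θ_{T(k−1)}`. -/
def Qcal (ω : Om) (k : ℕ) : PtM := muU (theta ((ladderT ω (k - 1)).toNat : ℤ) ω) 0

/-- `𝕐(k) = π(𝒬(k))`. -/
def Ybb (ω : Om) (k : ℕ) : ℝ≥0 := piM (Qcal ω k)

/-- The backward maximum `L(m) = max_{0 ≤ k ≤ m} S(−k)`. -/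
def Lmax (ω : Om) (m : ℕ) : ℤ :=
  Finset.sup' (Finset.range (m + 1)) Finset.nonempty_range_add_one (fun k => Sw ω (-(k : ℤ)))

/-- The ancestor set `𝒜(n) = {n − T(k)∘ϑ^n : k ≥ 0}` (only finite ladder times). -/
def Aset (ω : Om) (n : ℕ) : Set ℤ :=
  {a | ∃ k j : ℕ, ladderT (dual (n : ℤ) ω) k = (j : ℕ∞) ∧ a = (n : ℤ) - (j : ℤ)}

/-- `mrca(m,n) = max(𝒜(m) ∩ 𝒜(n))`. -/
def mrcaZ (ω : Om) (m n : ℕ) : ℤ := sSup (Aset ω m ∩ Aset ω n)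

/-- `χ(m,k) = inf{j ≥ m+1 : S(j) = S(m+1) − k}`. -/
def chiT (ω : Om) (m k : ℕ) : ℕ∞ :=
  sInf {x : ℕ∞ | ∃ j : ℕ, x = (j : ℕ∞) ∧ m + 1 ≤ j ∧
    Sw ω (j : ℤ) = Sw ω ((m : ℤ) + 1) - (k : ℤ)}

/-- `χ(m) = inf{j ≥ m+1 : S(j) = S(m) − 1}`. -/
def chiF (ω : Om) (m : ℕ) : ℕ∞ :=
  sInf {x : ℕ∞ | ∃ j : ℕ, x = (j : ℕ∞) ∧ m + 1 ≤ j ∧ Sw ω (j : ℤ) = Sw ω (m : ℤ) - 1}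

/-- The functional `D_ℓ(𝕊₀^m)` of the spine, expressed through the dual walk:
`D_ℓ = (Σ_{i : 0 < T(i) ≤ min(τ_ℓ, m)} 𝕐(i) − 1_{τ_ℓ ≤ m} π(μ_ℓ)) ∘ ϑ^m`, with `D_0 ≡ 0`. -/
def Dfun (ω : Om) (m : ℕ) (ℓ : ℤ) : ℝ :=
  if ℓ < 1 then 0 else
    (∑ i ∈ (Finset.Icc 1 m).filter
        (fun i => 0 < ladderT (dual (m : ℤ) ω) i ∧
          ladderT (dual (m : ℤ) ω) i ≤ min (tauUp (dual (m : ℤ) ω) ℓ) (m : ℕ∞)),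
      (Ybb (dual (m : ℤ) ω) i : ℝ))
    - (if tauUp (dual (m : ℤ) ω) ℓ ≤ (m : ℕ∞) then (piM (muU (dual (m : ℤ) ω) ℓ) : ℝ) else 0)

/-- `K_j = 2𝒱(j−1) − ℍ(j)`. -/
def Kt (ω : Om) (j : ℕ) : ℝ := 2 * ∑ k ∈ Finset.range j, (Vc ω (k : ℤ) : ℝ) - (Hchr ω j : ℝ)

/-- The chronological contour process: on `[K_n, K_{n+1}]` it increases at rate `+1` from
`ℍ(n)` up to `ℍ(n) + V_n` and then decreases at rate `−1` down to `ℍ(n+1)`. -/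
def contour (ω : Om) (t : ℝ) : ℝ :=
  let n := sSup {j : ℕ | Kt ω j ≤ t}
  min ((Hchr ω n : ℝ) + (t - Kt ω n)) ((Hchr ω (n + 1) : ℝ) + (Kt ω (n + 1) - t))


/-! The `i`-th backward increment of the dual walk `S ∘ ϑ^m` is the `(m + i)`-th forward increment
of `S`, so `(S ∘ ϑ^m)(-k) = S(m) - S(m + k)`. Maximising over `k ≤ n - m` turns this into `S(m)`
minus the minimum of `S` on `{m, …, n}`. -/

theorem sub_inf'_eq_sup'_sub {ι α : Type*} [AddCommGroup α] [LinearOrder α]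
    [IsOrderedAddMonoid α] {s : Finset ι} (hs : s.Nonempty) (f : ι → α) (c : α) :
    c - s.inf' hs f = s.sup' hs (fun i => c - f i) :=
  eq_of_forall_ge_iff fun b => by
    simp only [sub_le_comm (a := c), Finset.le_inf'_iff, Finset.sup'_le_iff]

theorem Sw_natCast (ω : Om) (k : ℕ) :
    Sw ω k = ∑ i ∈ Finset.range k, ((Multiset.card (Pc ω i) : ℤ) - 1) := by
  simp [Sw]

theorem Sw_neg_natCast (ω : Om) (k : ℕ) :
    Sw ω (-k) = -∑ i ∈ Finset.range k, ((Multiset.card (Pc ω (-(i : ℤ) - 1)) : ℤ) - 1) := by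
  rcases Nat.eq_zero_or_pos k with rfl | hk
  · simp [Sw]
  · rw [Sw, if_neg (by omega)]
    simp

theorem Pc_dual_neg_natCast_sub_one (ω : Om) (m i : ℕ) :
    Pc (dual m ω) (-(i : ℤ) - 1) = Pc ω ↑(m + i) := by
  simp only [Pc, dual]
  congr 2
  push_cast
  ring

theorem Sw_dual_neg_natCast (ω : Om) (m k : ℕ) :
    Sw (dual m ω) (-k) = Sw ω m - Sw ω ↑(m + k) := by
  simp only [Sw_neg_natCast, Sw_natCast, Pc_dual_neg_natCast_sub_one, Finset.sum_range_add]
  ring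

theorem Lmax_dual (ω : Om) (m j : ℕ) :
    Lmax (dual m ω) j
      = Sw ω m - (Finset.Icc m (m + j)).inf' (Finset.nonempty_Icc.2 (Nat.le_add_right m j))
          (fun k => Sw ω k) := by
  have hIcc : (Finset.range (j + 1)).image (m + ·) = Finset.Icc m (m + j) := by
    rw [Finset.range_eq_Ico, Finset.image_add_left_Ico, Nat.add_zero, ← Nat.add_assoc,
      Finset.Ico_add_one_right_eq_Icc]
  rw [sub_inf'_eq_sup'_sub]
  simp only [Lmax, Sw_dual_neg_natCast, ← hIcc, Finset.sup'_image]
  rfl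

theorem stmt3 (ω : Om) (m n : ℕ) (hmn : m ≤ n) :
    Lmax (dual (m : ℤ) ω) (n - m)
      = Sw ω (m : ℤ) -
        Finset.inf' (Finset.Icc m n) (Finset.nonempty_Icc.2 hmn) (fun k => Sw ω (k : ℤ)) := by
  obtain ⟨j, rfl⟩ := Nat.exists_eq_add_of_le hmn
  rw [Nat.add_sub_cancel_left]
  exact Lmax_dual ω m j

end
end

section
/- Let S be a walk with S(0)=0 whose negative jumps are of size exactly −1. Fix m ≥ 0 with |𝒫_m| > 0 and set χ(m) = inf{j ≥ m+1 : S(j) = S(m) − 1}. Then for every n with m+1 ≤ n ≤ χ(m)−1, the number of weak ascending ladder times of the reversed walk from n strictly exceeds that from m; equivalently, the height process satisfies 𝓗(n) > 𝓗(m). -/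
open scoped Classical NNReal
noncomputable section

/-
The Lukasiewicz path only jumps down by `1`, so as long as it has not reached
`S(m) - 1` after time `m` it stays at or above `S(m)` on `[m, n]`. Hence every ancestor of `m`
remains an ancestor of `n`, and `n` has one more: the individual just before the time
where `S` attains its minimum over `[m+1, n]`.
-/

open Finset

def ancestors (S : ℕ → ℤ) (n : ℕ) : Finset ℕ :=
  (range n).filter fun k => ∀ j ∈ Icc (k + 1) n, S (k + 1) ≤ S j

lemma ancestors_subset {S : ℕ → ℤ} {m n : ℕ} (hmn : m ≤ n)
    (hmin : ∀ j ∈ Icc m n, S m ≤ S j) : ancestors S m ⊆ ancestors S n := by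
  intro k hk
  simp only [ancestors, mem_filter, mem_range, mem_Icc] at hk ⊢
  obtain ⟨hkm, hk⟩ := hk
  refine ⟨by omega, fun j hj => ?_⟩
  by_cases hjm : j ≤ m
  · exact hk j ⟨hj.1, hjm⟩
  · exact (hk m ⟨hkm, le_rfl⟩).trans (hmin j (mem_Icc.2 ⟨by omega, hj.2⟩))

lemma exists_mem_ancestors_ge (S : ℕ → ℤ) {m n : ℕ} (hmn : m < n) :
    ∃ k ∈ ancestors S n, m ≤ k := by
  obtain ⟨j₀, hj₀, hmin⟩ := exists_min_image (Icc (m + 1) n) S ⟨n, mem_Icc.2 ⟨hmn, le_rfl⟩⟩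
  rw [mem_Icc] at hj₀
  refine ⟨j₀ - 1, ?_, by omega⟩
  have hsucc : j₀ - 1 + 1 = j₀ := by omega
  simp only [ancestors, mem_filter, mem_range, hsucc]
  exact ⟨by omega, fun j hj => hmin j (by simp only [mem_Icc] at hj ⊢; omega)⟩

lemma card_ancestors_lt {S : ℕ → ℤ} {m n : ℕ} (hmn : m < n)
    (hmin : ∀ j ∈ Icc m n, S m ≤ S j) : #(ancestors S m) < #(ancestors S n) := by
  obtain ⟨k, hkn, hmk⟩ := exists_mem_ancestors_ge S hmn
  have hkm : k ∉ ancestors S m := fun hk => by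
    simp only [ancestors, mem_filter, mem_range] at hk
    omega
  exact card_lt_card <| (ssubset_iff_of_subset (ancestors_subset hmn.le hmin)).2 ⟨k, hkn, hkm⟩

lemma le_of_forall_ne_sub_one {S : ℕ → ℤ} (hS : ∀ k, S k - 1 ≤ S (k + 1)) {m n : ℕ}
    (havoid : ∀ j ∈ Icc (m + 1) n, S j ≠ S m - 1) : ∀ j ∈ Icc m n, S m ≤ S j := by
  intro j hj
  rw [mem_Icc] at hj
  obtain ⟨hmj, hjn⟩ := hj
  induction j, hmj using Nat.le_induction with
  | base => exact le_rfl
  | succ j hmj ih =>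
    have hne := havoid (j + 1) (mem_Icc.2 ⟨by omega, hjn⟩)
    have hstep := hS j
    have hj := ih (by omega)
    omega

lemma genH_eq_card_ancestors (ω : Om) (n : ℕ) :
    genH ω n = #(ancestors (fun j => Sw ω j) n) := by
  simp only [genH, ancestors, Nat.cast_succ]
  congr!

lemma Sw_natCast_succ (ω : Om) (k : ℕ) :
    Sw ω ((k + 1 : ℕ) : ℤ) = Sw ω k + ((Multiset.card (Pc ω k) : ℤ) - 1) := by
  simp only [Sw, Int.natCast_nonneg, if_true, Int.toNat_natCast, sum_range_succ]

lemma Sw_natCast_sub_one_le (ω : Om) (k : ℕ) : Sw ω k - 1 ≤ Sw ω ((k + 1 : ℕ) : ℤ) := by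
  rw [Sw_natCast_succ]
  omega

lemma Sw_ne_sub_one_of_lt_chiF {ω : Om} {m j : ℕ} (hj : m + 1 ≤ j) (hχ : (j : ℕ∞) < chiF ω m) :
    Sw ω j ≠ Sw ω m - 1 :=
  fun hhit => (sInf_le ⟨j, rfl, hj, hhit⟩ : chiF ω m ≤ j).not_gt hχ

theorem stmt5_general (ω : Om) (m n : ℕ)
    (h1 : m + 1 ≤ n) (h2 : (n : ℕ∞) < chiF ω m) :
    genH ω m < genH ω n := by
  have havoid : ∀ j ∈ Icc (m + 1) n, Sw ω j ≠ Sw ω m - 1 := fun j hj =>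
    Sw_ne_sub_one_of_lt_chiF (mem_Icc.1 hj).1 <|
      lt_of_le_of_lt (by exact_mod_cast (mem_Icc.1 hj).2) h2
  rw [genH_eq_card_ancestors, genH_eq_card_ancestors]
  exact card_ancestors_lt h1 (le_of_forall_ne_sub_one (Sw_natCast_sub_one_le ω) havoid)

theorem stmt5 (ω : Om) (m n : ℕ) (hP : 0 < Multiset.card (Pc ω (m : ℤ)))
    (h1 : m + 1 ≤ n) (h2 : (n : ℕ∞) < chiF ω m) :
    genH ω m < genH ω n :=
  stmt5_general ω m n h1 h2

end
end

section
/- For 0 ≤ m ≤ n, the shifted spine 𝕊ₘⁿ := 𝕊₀^{n−m}∘θ_m satisfies π(𝕊ₘⁿ) = ℍ(n) − min_{k=m,…,n} ℍ(k), i.e., the height of the shifted spine is the Skorokhod-type reflection of the chronological height process. -/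
open scoped Classical NNReal
noncomputable section

/-!
By induction on `n`, `𝕊₀ⁿ = C ++ 𝕊ₘⁿ` for a prefix `C` of point measures. A push, or a pop that
finds a component with at least two atoms inside `𝕊ₘⁿ`, leaves `C` alone and keeps `π(C) ≤ ℍ(n)`;
otherwise the pop empties `𝕊ₘⁿ` and acts on `C`, which can only lower `π(C)`, and then
`ℍ(n) = π(C)`. So `π(C)` is the running minimum `min_{m ≤ k ≤ n} ℍ(k)`, and
`π(𝕊ₘⁿ) = ℍ(n) - π(C)`.
-/

@[simp] lemma piL_nil : piL [] = 0 := rfl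

@[simp] lemma piL_cons (ν : PtM) (Y : List PtM) : piL (ν :: Y) = piM ν + piL Y := by
  simp [piL]

@[simp] lemma piL_append (Y Z : List PtM) : piL (Y ++ Z) = piL Y + piL Z := by
  simp [piL]

@[simp] lemma piL_reverse (Y : List PtM) : piL Y.reverse = piL Y := by
  simp [piL, List.sum_reverse]

lemma piM_upsilon_le (j : ℕ) (ν : PtM) : piM (upsilon j ν) ≤ piM ν :=
  Multiset.sup_le.2 fun _ ha =>
    Multiset.le_sup <| (Multiset.mem_sort _).1 <| List.mem_of_mem_take <| Multiset.mem_coe.1 ha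

lemma piL_phiSp_zero_le (Y : List PtM) : piL (phiSp Y 0) ≤ piL Y := by
  have hsplit := List.takeWhile_append_dropWhile
    (p := fun ν : PtM => decide (Multiset.card ν < 2)) (l := Y.reverse)
  unfold phiSp
  rw [if_pos rfl]
  split
  · exact zero_le
  · next h t hd =>
    rw [hd] at hsplit
    calc piL (upsilon 1 h :: t).reverse = piM (upsilon 1 h) + piL t := by simp [add_comm]
      _ ≤ piM h + piL t := by gcongr; exact piM_upsilon_le 1 h
      _ ≤ piL Y := by rw [← piL_reverse Y, ← hsplit, piL_append, piL_cons]; exact le_add_self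

lemma phiSp_append (C X : List PtM) (ν : PtM) :
    phiSp (C ++ X) ν = C ++ phiSp X ν ∨
      ν = 0 ∧ phiSp X ν = [] ∧ phiSp (C ++ X) ν = phiSp C 0 := by
  by_cases hν : ν = 0
  · subst hν
    unfold phiSp
    rw [if_pos rfl, if_pos rfl, if_pos rfl, List.reverse_append, List.dropWhile_append]
    cases hd : X.reverse.dropWhile (fun ν => decide (Multiset.card ν < 2)) with
    | nil => right; simp
    | cons h t => left; simp
  · left
    simp [phiSp, hν]

lemma exists_spine_add_eq_append (ω : Om) (m d : ℕ) :
    ∃ C : List PtM, spine ω (m + d) = C ++ spine (theta m ω) d ∧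
      piL C = (Finset.Icc m (m + d)).inf' (Finset.nonempty_Icc.2 (Nat.le_add_right m d))
        (Hchr ω) := by
  induction d with
  | zero => exact ⟨spine ω m, by simp [spine], by simp [Hchr]⟩
  | succ d ih =>
    obtain ⟨C, hC, hCinf⟩ := ih
    have hstep : spine ω (m + (d + 1)) = phiSp (C ++ spine (theta m ω) d) (Pc ω ↑(m + d)) := by
      rw [← hC]; rfl
    have hθstep : spine (theta m ω) (d + 1) = phiSp (spine (theta m ω) d) (Pc ω ↑(m + d)) := by
      simp [spine, Pc, theta]
    have hinf : (Finset.Icc m (m + (d + 1))).inf'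
        (Finset.nonempty_Icc.2 (Nat.le_add_right m (d + 1))) (Hchr ω)
          = min (Hchr ω (m + (d + 1))) (piL C) := by
      have hIcc : Finset.Icc m (m + (d + 1)) = insert (m + (d + 1)) (Finset.Icc m (m + d)) :=
        (Finset.insert_Icc_right_eq_Icc_add_one (b := m + d) (by omega)).symm
      rw [Finset.inf'_congr _ hIcc (fun _ _ => rfl), Finset.inf'_insert _ _, hCinf]
    rcases phiSp_append C (spine (theta m ω) d) (Pc ω ↑(m + d)) with hpush | ⟨-, hempty, hpop⟩
    · refine ⟨C, by rw [hstep, hθstep, hpush], ?_⟩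
      rw [hinf, min_eq_right]
      rw [Hchr, hstep, hpush, piL_append]
      exact le_self_add
    · refine ⟨phiSp C 0, by rw [hstep, hθstep, hempty, hpop, List.append_nil], ?_⟩
      rw [hinf, min_eq_left]
      · rw [Hchr, hstep, hpop]
      · rw [Hchr, hstep, hpop]
        exact piL_phiSp_zero_le C

theorem stmt14 (ω : Om) (m n : ℕ) (hmn : m ≤ n) :
    (piL (spine (theta (m : ℤ) ω) (n - m)) : ℝ)
      = (Hchr ω n : ℝ) -
        Finset.inf' (Finset.Icc m n) (Finset.nonempty_Icc.2 hmn) (fun k => (Hchr ω k : ℝ)) := by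
  obtain ⟨d, rfl⟩ := Nat.exists_eq_add_of_le hmn
  obtain ⟨C, hC, hCinf⟩ := exists_spine_add_eq_append ω m d
  have hinf : (Finset.Icc m (m + d)).inf' (Finset.nonempty_Icc.2 hmn) (fun k => (Hchr ω k : ℝ))
      = piL C := by
    rw [hCinf]
    exact (Finset.apply_inf'_eq_inf'_comp _ _ NNReal.coe_min).symm
  rw [hinf, Hchr, hC, piL_append, NNReal.coe_add, Nat.add_sub_cancel_left]
  ring

end
end
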